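/- arXiv:1806.03100 — 8 statements merged into one kernel-verified Lean document; each statement's English description precedes it below -/
import Mathlib

section
/- For integers k ≥ m-1 and m ≥ 2, the sum over i from 0 to m-1 of (-1)^i · C(k, i) · C(k+m-i-2, m-i) equals (-1)^(m-1) · C(k, m). -/
/-!
Chu–Vandermonde in `ℤ` for the upper indices `k` and `1 - k` gives
`∑ i + j = m, C(k, i) C(1 - k, j) = C(1, m) = 0` for `m ≥ 2`. Since
`C(1 - k, j) = (-1) ^ j C(k + j - 2, j)`, after multiplying by `(-1) ^ m` the terms with `i < m`
form the sum in question, and the term `i = m` is `(-1) ^ m C(k, m)`.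
-/

open Finset

lemma Int.ringChoose_neg_natCast (a j : ℕ) :
    Ring.choose (-(a : ℤ)) j = (-1) ^ j * ((a + j - 1).choose j : ℤ) := by
  cases j with
  | zero => simp
  | succ j =>
    rw [Ring.choose_neg, show (a : ℤ) + (j + 1 : ℕ) - 1 = ((a + j : ℕ) : ℤ) by push_cast; ring,
      Ring.choose_natCast, Units.smul_def, Int.coe_negOnePow_natCast, smul_eq_mul,
      show a + (j + 1) - 1 = a + j by omega]

lemma neg_one_pow_mul_neg_one_pow_sub {R : Type*} [Monoid R] [HasDistribNeg R] {i m : ℕ}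
    (h : i ≤ m) : (-1 : R) ^ m * (-1) ^ (m - i) = (-1) ^ i := by
  rw [← pow_add, show m + (m - i) = i + 2 * (m - i) by omega, pow_add, pow_mul, neg_one_sq,
    one_pow, mul_one]

lemma sum_range_succ_neg_one_pow_mul_choose_mul_choose {k : ℕ} (hk : 1 ≤ k) (m : ℕ) :
    ∑ i ∈ range (m + 1), (-1 : ℤ) ^ i * (k.choose i : ℤ) * ((k + m - i - 2).choose (m - i) : ℤ) =
      (-1) ^ m * (Nat.choose 1 m : ℤ) := by
  have vandermonde := Ring.add_choose_eq (r := (k : ℤ)) (s := -((k - 1 : ℕ) : ℤ)) m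
    (Commute.all _ _)
  rw [show (k : ℤ) + -((k - 1 : ℕ) : ℤ) = ((1 : ℕ) : ℤ) by push_cast [hk]; ring,
    Ring.choose_natCast, Nat.sum_antidiagonal_eq_sum_range_succ_mk] at vandermonde
  rw [vandermonde, mul_sum]
  refine sum_congr rfl fun i hi => ?_
  have hi : i ≤ m := Nat.lt_succ_iff.mp (mem_range.mp hi)
  rw [Ring.choose_natCast, Int.ringChoose_neg_natCast,
    show k - 1 + (m - i) - 1 = k + m - i - 2 by omega, ← neg_one_pow_mul_neg_one_pow_sub hi]
  ring

theorem stmt_3 (k m : ℕ) (hm : 2 ≤ m) (hk : m - 1 ≤ k) :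
    ∑ i ∈ Finset.range m,
        (-1 : ℤ) ^ i * (k.choose i : ℤ) * ((k + m - i - 2).choose (m - i) : ℤ) =
      (-1 : ℤ) ^ (m - 1) * (k.choose m : ℤ) := by
  have h := sum_range_succ_neg_one_pow_mul_choose_mul_choose (by omega : 1 ≤ k) m
  rw [sum_range_succ, Nat.choose_eq_zero_of_lt (by omega : 1 < m), Nat.sub_self,
    Nat.choose_zero_right] at h
  obtain ⟨l, rfl⟩ : ∃ l, m = l + 1 := ⟨m - 1, by omega⟩
  rw [Nat.add_sub_cancel]
  push_cast at h
  linear_combination h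
end

section
/- For integers k ≥ 1 and m ≥ 1, the sum over i from 0 to m-1 of (-1)^i · C(m, i) · C(k+m-i-1, m-i) equals C(k-1, m) + (-1)^(m-1). -/
open Finset

lemma G_eq (n : ℕ) : ∀ (m x : ℕ),
    ∑ j ∈ Finset.range (m+1), (-1:ℤ)^j * (m.choose j : ℤ) * ((x+j).choose n : ℤ) =
      (-1:ℤ)^m * (if m ≤ n then ((x.choose (n-m) : ℤ)) else 0) := by
  intro m
  induction m with
  | zero => intro x; simp
  | succ m ih =>
    intro x
    have hrec : ∑ j ∈ Finset.range (m+2), (-1:ℤ)^j * ((m+1).choose j : ℤ) * ((x+j).choose n : ℤ)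
        = (∑ j ∈ Finset.range (m+1), (-1:ℤ)^j * (m.choose j : ℤ) * ((x+j).choose n : ℤ))
          - ∑ j ∈ Finset.range (m+1), (-1:ℤ)^j * (m.choose j : ℤ) * (((x+1)+j).choose n : ℤ) := by
      rw [Finset.sum_range_succ' _ (m+1)]
      have h1 : ∀ j, (-1:ℤ)^(j+1) * ((m+1).choose (j+1) : ℤ) * ((x+(j+1)).choose n : ℤ)
          = (-1:ℤ)^(j+1) * (m.choose (j+1) : ℤ) * ((x+(j+1)).choose n : ℤ)
            - (-1:ℤ)^j * (m.choose j : ℤ) * (((x+1)+j).choose n : ℤ) := by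
        intro j
        rw [Nat.choose_succ_succ]
        push_cast
        have : x + (j+1) = (x+1) + j := by omega
        rw [this]
        ring
      rw [Finset.sum_congr rfl (fun j _ => h1 j), Finset.sum_sub_distrib]
      have h2 : ∑ j ∈ Finset.range (m+1), (-1:ℤ)^(j+1) * (m.choose (j+1) : ℤ) * ((x+(j+1)).choose n : ℤ)
          + (-1:ℤ)^0 * ((m+1).choose 0 : ℤ) * ((x+0).choose n : ℤ)
          = ∑ j ∈ Finset.range (m+2), (-1:ℤ)^j * (m.choose j : ℤ) * ((x+j).choose n : ℤ) := by
        rw [Finset.sum_range_succ' _ (m+1)]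
        simp
      have h3 : ∑ j ∈ Finset.range (m+2), (-1:ℤ)^j * (m.choose j : ℤ) * ((x+j).choose n : ℤ)
          = ∑ j ∈ Finset.range (m+1), (-1:ℤ)^j * (m.choose j : ℤ) * ((x+j).choose n : ℤ) := by
        rw [Finset.sum_range_succ]
        simp
      linarith [h2, h3]
    rw [hrec, ih x, ih (x+1)]
    by_cases h : m + 1 ≤ n
    · have h' : m ≤ n := by omega
      simp only [h, h', if_true]
      have hp := Nat.choose_succ_succ x (n-m-1)
      simp only [Nat.succ_eq_add_one] at hp
      have e1 : n - m - 1 + 1 = n - m := by omega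
      have e2 : n - m - 1 = n - (m+1) := by omega
      rw [e1, e2] at hp
      rw [hp]
      push_cast
      ring
    · by_cases h' : m ≤ n
      · have hmn : m = n := by omega
        simp only [h, h', if_true, if_false]
        subst hmn
        simp
      · simp only [h, h', if_false]
        ring

theorem stmt_5 (k m : ℕ) (hk : 1 ≤ k) (hm : 1 ≤ m) :
    ∑ i ∈ Finset.range m,
        (-1 : ℤ) ^ i * (m.choose i : ℤ) * ((k + m - i - 1).choose (m - i) : ℤ) =
      ((k - 1).choose m : ℤ) + (-1 : ℤ) ^ (m - 1) := by
  have key := G_eq (k-1) m (k-1)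
  have hterm : ∀ i ∈ Finset.range m,
      (-1 : ℤ) ^ i * (m.choose i : ℤ) * ((k + m - i - 1).choose (m - i) : ℤ)
      = (-1 : ℤ) ^ i * (m.choose i : ℤ) * ((k + m - i - 1).choose (k-1) : ℤ) := by
    intro i hi
    rw [Finset.mem_range] at hi
    congr 2
    have h1 : k - 1 ≤ k + m - i - 1 := by omega
    have := Nat.choose_symm h1
    rw [← this]
    congr 1
    omega
  rw [Finset.sum_congr rfl hterm]
  have hfull : ∑ i ∈ Finset.range (m+1),
      (-1 : ℤ) ^ i * (m.choose i : ℤ) * ((k + m - i - 1).choose (k-1) : ℤ)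
      = (-1:ℤ)^m * ∑ j ∈ Finset.range (m+1), (-1:ℤ)^j * (m.choose j : ℤ) * (((k-1)+j).choose (k-1) : ℤ) := by
    rw [Finset.mul_sum, ← Finset.sum_range_reflect]
    apply Finset.sum_congr rfl
    intro i hi
    rw [Finset.mem_range] at hi
    have h0 : m + 1 - 1 - i = m - i := by omega
    rw [h0]
    have h1 : m.choose (m - i) = m.choose i := Nat.choose_symm (by omega)
    have h2 : k + m - (m - i) - 1 = (k-1) + i := by omega
    have h3 : (-1:ℤ)^(m-i) = (-1:ℤ)^m * (-1:ℤ)^i := by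
      rw [← pow_add]
      have : m + i = 2*i + (m - i) := by omega
      rw [this, pow_add, pow_mul]
      simp
    rw [h1, h2, h3]
    ring
  have hif : (if m ≤ k-1 then (((k-1).choose (k-1-m)) : ℤ) else 0) = ((k-1).choose m : ℤ) := by
    by_cases h : m ≤ k - 1
    · simp only [h, if_true]
      exact_mod_cast Nat.choose_symm h
    · simp only [h, if_false]
      rw [Nat.choose_eq_zero_of_lt (by omega)]
      simp
  rw [hif] at key
  set S := ∑ i ∈ Finset.range m, (-1 : ℤ) ^ i * (m.choose i : ℤ) * ((k + m - i - 1).choose (k-1) : ℤ) with hS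
  have e1 : ∑ i ∈ Finset.range (m+1),
      (-1 : ℤ) ^ i * (m.choose i : ℤ) * ((k + m - i - 1).choose (k-1) : ℤ) = S + (-1:ℤ)^m := by
    rw [Finset.sum_range_succ]
    have h4 : k + m - m - 1 = k - 1 := by omega
    rw [h4, Nat.choose_self, Nat.choose_self]
    push_cast
    ring
  have hsq : (-1:ℤ)^m * (-1:ℤ)^m = 1 := by
    rw [← pow_add, show m + m = 2*m from by ring, pow_mul]
    norm_num
  have e2 : S + (-1:ℤ)^m = (-1:ℤ)^m * ((-1:ℤ)^m * ((k-1).choose m : ℤ)) := by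
    rw [← e1, hfull, key]
  rw [← mul_assoc, hsq, one_mul] at e2
  have hneg : (-1:ℤ)^(m-1) = -(-1:ℤ)^m := by
    have h5 : m - 1 + 1 = m := by omega
    calc (-1:ℤ)^(m-1) = -((-1:ℤ)^(m-1) * (-1)) := by ring
      _ = -(-1:ℤ)^(m-1+1) := by rw [pow_succ]
      _ = -(-1:ℤ)^m := by rw [h5]
  rw [hneg]
  linarith
end

section
/- For integers k ≥ 1, 0 ≤ μ ≤ k-1, and 1 ≤ i ≤ m, the sum over j from 1 to m of (-1)^(j-i) · C(k+j-i-1, j-i) · C(k-1-μ, m-j) equals (-1)^(m-i) · C(m-i+μ, m-i). -/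
lemma aux_vdm : ∀ a μ n : ℕ,
    ∑ t ∈ Finset.range (n+1),
      (-1:ℤ)^t * ((μ + a + t).choose t : ℤ) * ((a).choose (n-t) : ℤ)
      = (-1:ℤ)^n * ((n+μ).choose n : ℤ) := by
  intro a
  induction a with
  | zero =>
    intro μ n
    rw [Finset.sum_eq_single n]
    · simp [Nat.add_comm μ n]
    · intro t ht hne
      rw [Finset.mem_range] at ht
      rw [Nat.choose_eq_zero_of_lt (show (0:ℕ) < n - t by omega)]
      simp
    · simp
  | succ a ih =>
    intro μ n
    cases n with
    | zero => simp
    | succ n' =>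
      have expand :
        ∑ t ∈ Finset.range (n'+1+1),
          (-1:ℤ)^t * ((μ + (a+1) + t).choose t : ℤ) * ((a+1).choose (n'+1-t) : ℤ)
        = (∑ t ∈ Finset.range (n'+1+1),
            (-1:ℤ)^t * (((μ+1) + a + t).choose t : ℤ) * ((a).choose (n'+1-t) : ℤ))
        + (∑ t ∈ Finset.range (n'+1),
            (-1:ℤ)^t * (((μ+1) + a + t).choose t : ℤ) * ((a).choose (n'-t) : ℤ)) := by
        rw [Finset.sum_range_succ, Finset.sum_range_succ
          (f := fun t => (-1:ℤ)^t * (((μ+1) + a + t).choose t : ℤ) * ((a).choose (n'+1-t) : ℤ))]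
        have hlast : ((μ + (a+1) + (n'+1)).choose (n'+1) : ℤ)
            = (((μ+1) + a + (n'+1)).choose (n'+1) : ℤ) := by
          have : μ + (a+1) + (n'+1) = (μ+1) + a + (n'+1) := by omega
          rw [this]
        have hS : ∑ t ∈ Finset.range (n'+1),
            (-1:ℤ)^t * ((μ + (a+1) + t).choose t : ℤ) * ((a+1).choose (n'+1-t) : ℤ)
          = ∑ t ∈ Finset.range (n'+1),
            ((-1:ℤ)^t * (((μ+1) + a + t).choose t : ℤ) * ((a).choose (n'+1-t) : ℤ)
            + (-1:ℤ)^t * (((μ+1) + a + t).choose t : ℤ) * ((a).choose (n'-t) : ℤ)) := by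
          apply Finset.sum_congr rfl
          intro t ht
          simp only [Finset.mem_range] at ht
          have h1 : μ + (a+1) + t = (μ+1) + a + t := by omega
          have h2 : n'+1-t = (n'-t)+1 := by omega
          rw [h1, h2, Nat.choose_succ_succ, Nat.succ_eq_add_one]
          have h3 : n' - t + 1 = n' + 1 - t := by omega
          rw [h3]
          push_cast
          ring
        rw [hS, Finset.sum_add_distrib, hlast]
        simp [Nat.sub_self]
        ring
      rw [expand, ih (μ+1) (n'+1), ih (μ+1) n']
      have h4 : n'+1+(μ+1) = (n'+μ+1)+1 := by omega
      have h5 : n'+(μ+1) = n'+μ+1 := by omega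
      rw [h4, h5, Nat.choose_succ_succ]
      have h6 : n'+1+μ = n'+μ+1 := by omega
      rw [h6]
      push_cast
      ring

theorem stmt_9 (k μ m i : ℕ) (hk : 1 ≤ k) (hμ : μ ≤ k - 1) (hi1 : 1 ≤ i) (him : i ≤ m) :
    ∑ j ∈ Finset.Icc 1 m,
        (if i ≤ j then
          (-1 : ℤ) ^ (j - i) * ((k + j - i - 1).choose (j - i) : ℤ) *
            ((k - 1 - μ).choose (m - j) : ℤ)
        else 0) =
      (-1 : ℤ) ^ (m - i) * ((m - i + μ).choose (m - i) : ℤ) := by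
  set a := k - 1 - μ with ha
  have hstep1 :
      ∑ j ∈ Finset.Icc 1 m,
        (if i ≤ j then
          (-1 : ℤ) ^ (j - i) * ((k + j - i - 1).choose (j - i) : ℤ) *
            ((k - 1 - μ).choose (m - j) : ℤ)
        else 0)
      = ∑ j ∈ Finset.Icc i m,
          (-1 : ℤ) ^ (j - i) * ((k + j - i - 1).choose (j - i) : ℤ) *
            ((k - 1 - μ).choose (m - j) : ℤ) := by
    rw [← Finset.sum_subset (Finset.Icc_subset_Icc_left hi1)]
    · apply Finset.sum_congr rfl
      intro j hj
      simp only [Finset.mem_Icc] at hj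
      rw [if_pos hj.1]
    · intro j hj hj'
      simp only [Finset.mem_Icc] at hj hj'
      rw [if_neg (by omega)]
  rw [hstep1]
  rw [show Finset.Icc i m = Finset.Ico i (m+1) by rw [Finset.Ico_add_one_right_eq_Icc]]
  rw [Finset.sum_Ico_eq_sum_range]
  have hn : m + 1 - i = (m - i) + 1 := by omega
  rw [hn]
  have := aux_vdm a μ (m - i)
  rw [← this]
  apply Finset.sum_congr rfl
  intro t ht
  simp only [Finset.mem_range] at ht
  have e1 : i + t - i = t := by omega
  have e2 : k + (i + t) - i - 1 = μ + a + t := by omega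
  have e3 : m - (i + t) = (m - i) - t := by omega
  rw [e1, e2, e3]
end

section
/- Consider the m-order discrete system X(k+1) = A·X(k) + B₀·u(k), where A is the m×m matrix with 1's on the diagonal and h on the superdiagonal, and B₀ = (0, …, 0, h)ᵀ. If X(k) = 0 (the system reaches the origin after k steps), then the initial state satisfies x_i(0) = (-1)^(m-i+1) · Σ_{μ=0}^{k-1} C(m-i+μ, m-i) · h^(m-i+1) · u(μ) for 1 ≤ i ≤ m. -/
noncomputable def cc (h : ℝ) (n d : ℕ) : ℝ :=
  if n = 0 then (if d = 0 then 1 else 0)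
  else (-1) ^ d * h ^ d * ((n - 1 + d).choose d)

lemma cc_zero (h : ℝ) (n : ℕ) : cc h n 0 = 1 := by
  unfold cc; split <;> simp

lemma cc_rec (h : ℝ) (n d : ℕ) :
    cc h n (d + 1) = cc h (n + 1) (d + 1) + h * cc h (n + 1) d := by
  have key : cc h (n + 1) (d + 1) + h * cc h (n + 1) d
      = (-1) ^ (d + 1) * h ^ (d + 1) * ((n + d).choose (d + 1)) := by
    simp only [cc, Nat.succ_ne_zero, if_false, Nat.add_sub_cancel]
    have heq : n + (d + 1) = (n + d) + 1 := rfl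
    rw [heq, Nat.choose_succ_succ]
    push_cast
    ring
  rw [key]
  rcases n with _ | n
  · simp [cc, Nat.choose_eq_zero_of_lt (Nat.lt_succ_self d)]
  · simp only [cc, Nat.succ_ne_zero, if_false, Nat.add_sub_cancel]
    ring_nf

lemma key_lemma (m : ℕ) (h : ℝ) (u : ℕ → ℝ) (Y : ℕ → ℕ → ℝ)
    (hsys : ∀ n j, j < m → Y (n + 1) j = Y n j + h * Y n (j + 1))
    (hbd : ∀ n, Y n m = u n) :
    ∀ n, ∀ i, i < m →
      Y 0 i = (∑ d ∈ Finset.range (m - i), cc h n d * Y n (i + d))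
        - ∑ μ ∈ Finset.range n, h * cc h (μ + 1) (m - 1 - i) * u μ := by
  intro n
  induction n with
  | zero =>
    intro i hi
    obtain ⟨s, hs⟩ : ∃ s, m - i = s + 1 := ⟨m - i - 1, by omega⟩
    rw [hs, Finset.sum_range_succ']
    simp [cc_zero, cc]
  | succ n ih =>
    intro i hi
    obtain ⟨s, hs⟩ : ∃ s, m - i = s + 1 := ⟨m - i - 1, by omega⟩
    have hs' : m - 1 - i = s := by omega
    rw [ih i hi, hs, hs']
    rw [Finset.sum_range_succ (f := fun μ => h * cc h (μ + 1) s * u μ)]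
    -- rewrite each Y (n+1) (i+d) using the system
    have hrw : ∀ d ∈ Finset.range (s + 1),
        cc h (n + 1) d * Y (n + 1) (i + d)
          = cc h (n + 1) d * Y n (i + d) + h * cc h (n + 1) d * Y n (i + d + 1) := by
      intro d hd
      rw [Finset.mem_range] at hd
      rw [hsys n (i + d) (by omega)]
      ring
    rw [Finset.sum_congr rfl hrw, Finset.sum_add_distrib]
    -- peel the last term of the shifted sum
    rw [Finset.sum_range_succ (f := fun d => h * cc h (n + 1) d * Y n (i + d + 1))]
    have hend : i + s + 1 = m := by omega
    rw [hend, hbd n]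
    -- peel first terms of the two main sums
    rw [Finset.sum_range_succ' (f := fun d => cc h n d * Y n (i + d))]
    rw [Finset.sum_range_succ' (f := fun d => cc h (n + 1) d * Y n (i + d))]
    have hcomb : ∀ d ∈ Finset.range s,
        cc h n (d + 1) * Y n (i + (d + 1))
          = cc h (n + 1) (d + 1) * Y n (i + (d + 1))
            + h * cc h (n + 1) d * Y n (i + d + 1) := by
      intro d hd
      rw [cc_rec]
      have : i + (d + 1) = i + d + 1 := by omega
      rw [this]; ring
    rw [Finset.sum_congr rfl hcomb, Finset.sum_add_distrib]
    simp only [cc_zero, Nat.add_zero]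
    ring

theorem stmt_11 (m : ℕ) (hm : 1 ≤ m) (h : ℝ) (hh : h ≠ 0)
    (u : ℕ → ℝ) (X : ℕ → Fin m → ℝ)
    (hsys : ∀ n : ℕ, ∀ i : Fin m,
      X (n + 1) i = X n i +
        (if hlt : (i : ℕ) + 1 < m then h * X n ⟨(i : ℕ) + 1, hlt⟩ else h * u n))
    (k : ℕ) (hfin : ∀ i : Fin m, X k i = 0) :
    ∀ i : Fin m, X 0 i =
      (-1 : ℝ) ^ (m - (i : ℕ)) *
        ∑ μ ∈ Finset.range k,
          ((m - 1 - (i : ℕ) + μ).choose (m - 1 - (i : ℕ)) : ℝ) *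
            h ^ (m - (i : ℕ)) * u μ := by
  intro i
  set Y : ℕ → ℕ → ℝ := fun n j => if hj : j < m then X n ⟨j, hj⟩ else u n with hY
  have hsys' : ∀ n j, j < m → Y (n + 1) j = Y n j + h * Y n (j + 1) := by
    intro n j hj
    simp only [hY, dif_pos hj]
    rw [hsys n ⟨j, hj⟩]
    by_cases hj1 : j + 1 < m
    · simp [dif_pos hj1]
    · simp [dif_neg hj1]
  have hbd : ∀ n, Y n m = u n := by
    intro n; simp [hY]
  have := key_lemma m h u Y hsys' hbd k i i.isLt
  have hY0 : Y 0 (i : ℕ) = X 0 i := by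
    simp [hY, i.isLt]
  have hzero : ∀ d ∈ Finset.range (m - (i : ℕ)),
      cc h k d * Y k ((i : ℕ) + d) = 0 := by
    intro d hd
    rw [Finset.mem_range] at hd
    have hlt : (i : ℕ) + d < m := by omega
    simp [hY, dif_pos hlt, hfin ⟨(i : ℕ) + d, hlt⟩]
  rw [hY0, Finset.sum_eq_zero hzero] at this
  rw [this, zero_sub, Finset.mul_sum, ← Finset.sum_neg_distrib]
  apply Finset.sum_congr rfl
  intro μ hμ
  have hi : (i : ℕ) < m := i.isLt
  obtain ⟨t, ht⟩ : ∃ t, m - 1 - (i : ℕ) = t := ⟨_, rfl⟩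
  have hmi : m - (i : ℕ) = t + 1 := by omega
  rw [ht, hmi]
  simp only [cc, Nat.succ_ne_zero, if_false, Nat.add_sub_cancel]
  rw [Nat.add_comm μ t]
  push_cast
  ring
end

section
/- Let m ≥ 1, k ≥ 1, h > 0, r > 0, s = ±1, and define the point a_k ∈ ℝ^m by coordinates x_i = (-1)^(i-1) · C(m+k-i, m-i+1) · h^(m-i+1) · r · s for 1 ≤ i ≤ m. Then a_k satisfies Σ_{i=0}^{m-1} C(m-1, i) h^i x_{i+1} = C(k, m) · h^m · r · s. -/
lemma key_lemma_s12 (l : ℕ) : ∀ d q : ℕ, q ≤ l + d →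
    ∑ i ∈ Finset.range (l+1), (-1:ℝ)^i * (l.choose i : ℝ) * ((l+d-i).choose q : ℝ)
      = (d.choose (l+d-q) : ℝ) := by
  induction l with
  | zero =>
    intro d q hq
    simp only [Finset.range_one, Finset.sum_singleton, pow_zero, Nat.choose_zero_right,
      Nat.cast_one, one_mul, Nat.zero_add, zero_add]
    exact congrArg _ (Nat.choose_symm (by omega : q ≤ d)).symm
  | succ l ih =>
    intro d q hq
    rcases Nat.lt_or_ge q (l+1+d) with hlt | hge
    · have hq' : q ≤ l + d := by omega
      rw [Finset.sum_range_succ']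
      have step : ∀ i ∈ Finset.range (l+1),
          (-1:ℝ)^(i+1) * ((l+1).choose (i+1) : ℝ) * ((l+1+d-(i+1)).choose q : ℝ)
          = -((-1:ℝ)^i * (l.choose i : ℝ) * ((l+d-i).choose q : ℝ))
            + (-1:ℝ)^(i+1) * (l.choose (i+1) : ℝ) * ((l+(d+1)-(i+1)).choose q : ℝ) := by
        intro i hi
        have h1 : l+1+d-(i+1) = l+d-i := by omega
        have h2 : l+(d+1)-(i+1) = l+d-i := by omega
        rw [h1, h2, Nat.choose_succ_succ]
        push_cast
        ring
      rw [Finset.sum_congr rfl step, Finset.sum_add_distrib, Finset.sum_neg_distrib]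
      rw [ih d q hq']
      have recomb : (∑ i ∈ Finset.range (l+1),
          (-1:ℝ)^(i+1) * (l.choose (i+1) : ℝ) * ((l+(d+1)-(i+1)).choose q : ℝ))
          + (-1:ℝ)^0 * ((l+1).choose 0 : ℝ) * ((l+1+d-0).choose q : ℝ)
          = ∑ i ∈ Finset.range (l+1+1), (-1:ℝ)^i * (l.choose i : ℝ) * ((l+(d+1)-i).choose q : ℝ) := by
        conv_rhs => rw [Finset.sum_range_succ']
        norm_num [show l+1+d = l+(d+1) from by omega]
      rw [add_assoc, recomb, Finset.sum_range_succ]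
      rw [ih (d+1) q (by omega)]
      simp only [Nat.choose_self, Nat.choose_succ_self, Nat.cast_zero]
      have hpascal : (d+1).choose (l+(d+1)-q) = d.choose (l+d-q) + d.choose (l+d-q+1) := by
        have : l+(d+1)-q = (l+d-q)+1 := by omega
        rw [this, Nat.choose_succ_succ]
      have : l+1+d-q = l+d-q+1 := by omega
      rw [this, hpascal]
      push_cast
      ring
    · -- q = l+1+d : only the i = 0 term survives
      have hqe : q = l+1+d := by omega
      have hz : ∀ i ∈ Finset.range (l+1+1), i ≠ 0 →
          (-1:ℝ)^i * ((l+1).choose i : ℝ) * ((l+1+d-i).choose q : ℝ) = 0 := by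
        intro i _ hi0
        have : (l+1+d-i).choose q = 0 := Nat.choose_eq_zero_of_lt (by omega)
        simp [this]
      rw [Finset.sum_eq_single 0 hz (by simp)]
      have h0 : l+1+d-0 = q := by omega
      have h1 : l+1+d-q = 0 := by omega
      rw [h0, h1]
      simp

theorem stmt_12 (m k : ℕ) (hm : 1 ≤ m) (hk : 1 ≤ k) (h r s : ℝ)
    (hh : 0 < h) (hr : 0 < r) (hs : s = 1 ∨ s = -1)
    (x : ℕ → ℝ)
    (hx : ∀ i : ℕ, 1 ≤ i → i ≤ m →
      x i = (-1 : ℝ) ^ (i - 1) * ((m + k - i).choose (m - i + 1) : ℝ) *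
        h ^ (m - i + 1) * r * s) :
    ∑ i ∈ Finset.range m, ((m - 1).choose i : ℝ) * h ^ i * x (i + 1) =
      (k.choose m : ℝ) * h ^ m * r * s := by
  obtain ⟨l, rfl⟩ : ∃ l, m = l + 1 := ⟨m - 1, by omega⟩
  have key := key_lemma_s12 l k (k-1) (by omega)
  have step : ∀ i ∈ Finset.range (l+1),
      ((l+1-1).choose i : ℝ) * h ^ i * x (i+1)
      = ((-1:ℝ)^i * (l.choose i : ℝ) * ((l+k-i).choose (k-1) : ℝ)) * (h ^ (l+1) * r * s) := by
    intro i hi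
    rw [Finset.mem_range] at hi
    rw [hx (i+1) (by omega) (by omega)]
    have h1 : l+1+k-(i+1) = l+k-i := by omega
    have h2 : l+1-(i+1)+1 = l+1-i := by omega
    have h3 : (l+k-i).choose (l+1-i) = (l+k-i).choose (k-1) := by
      have e : l+k-i - (l+1-i) = k-1 := by omega
      rw [← e, Nat.choose_symm (by omega)]
    have h4 : l+1-1 = l := by omega
    have h5 : i+1-1 = i := by omega
    rw [h1, h2, h3, h4, h5]
    have hpow : h ^ i * h ^ (l+1-i) = h ^ (l+1) := by
      rw [← pow_add]; congr 1; omega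
    linear_combination ((-1:ℝ)^i * (l.choose i : ℝ) * ((l+k-i).choose (k-1) : ℝ) * r * s) * hpow
  rw [Finset.sum_congr rfl step, ← Finset.sum_mul, key]
  have : l+k-(k-1) = l+1 := by omega
  rw [this]
  ring
end

section
/- Let m ≥ 1, k ≥ 1, h > 0, r > 0, s = ±1, and define a_k ∈ ℝ^m by x_i = (-1)^(i-1) · C(m+k-i, m-i+1) · h^(m-i+1) · r · s, and b_k (for k ≥ 2) by x_i = (-1)^(i-1) · (C(m+k-i, m-i+1) - 2) · h^(m-i+1) · r · s. Then Σ_{i=0}^{m-1} C(m, i) · h^i · x_{i+1} equals (C(k-1, m) + (-1)^(m-1)) · h^m · r · s for a_k, and equals (C(k-1, m) + (-1)^m) · h^m · r · s for b_k; hence a_k lies on the hyperplane N̄_m(k): ȳ(X) = (C(k-1,m) + (-1)^(m-1)) h^m r s while b_k does not. -/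
open Polynomial Finset

lemma key_poly (n m : ℕ) (hmn : m ≤ n) :
    ∑ i ∈ Finset.range (m+1), (-1:ℤ)^i * m.choose i * ((n-i).choose (m-i)) =
      ((n-m).choose m : ℤ) := by
  have h1 : ((X + 1 : ℤ[X]))^(n-m) =
      ∑ i ∈ Finset.range (m+1),
        (X+1)^(n-m) * ((X+1)^i * (-X)^(m-i) * (m.choose i : ℤ[X])) := by
    rw [← Finset.mul_sum, ← add_pow]
    simp
  have h2 := congrArg (fun p => Polynomial.coeff p m) h1
  simp only [finset_sum_coeff, coeff_X_add_one_pow] at h2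
  rw [show ∑ i ∈ Finset.range (m+1), (-1:ℤ)^i * m.choose i * ((n-i).choose (m-i))
      = ∑ i ∈ Finset.range (m+1), (-1:ℤ)^(m-i) * m.choose (m-i) * ((n-(m-i)).choose (m-(m-i))) from
      (Finset.sum_range_reflect _ _).symm]
  rw [h2]
  apply Finset.sum_congr rfl
  intro i hi
  simp only [Finset.mem_range] at hi
  have hi' : i ≤ m := Nat.lt_succ_iff.mp hi
  have hc : ((X+1:ℤ[X])^(n-m) * ((X+1)^i * (-X)^(m-i) * (m.choose i : ℤ[X]))).coeff m
      = (-1:ℤ)^(m-i) * m.choose i * ((n-m+i).choose i) := by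
    have hrw : ((X+1:ℤ[X])^(n-m) * ((X+1)^i * (-X)^(m-i) * (m.choose i : ℤ[X])))
        = (Polynomial.C ((-1:ℤ)^(m-i) * m.choose i) * (X+1)^(n-m+i)) * X^(m-i) := by
      simp only [map_mul, map_pow, map_neg, map_one, C_eq_natCast]
      ring
    rw [hrw, coeff_mul_X_pow', if_pos (Nat.sub_le m i)]
    have h3 : m - (m - i) = i := by omega
    rw [h3, coeff_C_mul, coeff_X_add_one_pow]
  rw [hc]
  have h3 : m - (m - i) = i := by omega
  have h4 : n - (m - i) = n - m + i := by omega
  rw [h3, h4, Nat.choose_symm hi']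

lemma key_sum (m k : ℕ) (hm : 1 ≤ m) (hk : 1 ≤ k) :
    ∑ i ∈ Finset.range m, (-1:ℤ)^i * m.choose i * ((m+k-1-i).choose (m-i)) =
      ((k-1).choose m : ℤ) + (-1:ℤ)^(m-1) := by
  have hmn : m ≤ m + k - 1 := by omega
  have h := key_poly (m + k - 1) m hmn
  rw [Finset.sum_range_succ] at h
  have h1 : m + k - 1 - m = k - 1 := by omega
  obtain ⟨j, hj⟩ : ∃ j, m = j + 1 := ⟨m-1, by omega⟩
  have h2 : (-1:ℤ)^m = -(-1:ℤ)^(m-1) := by subst hj; simp [pow_succ]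
  simp only [Nat.sub_self, Nat.choose_self, Nat.choose_zero_right, h1] at h
  push_cast at h ⊢
  linarith [h, h2]

lemma key_alt (m : ℕ) (hm : 1 ≤ m) :
    ∑ i ∈ Finset.range m, (-1:ℤ)^i * m.choose i = (-1:ℤ)^(m-1) := by
  have h := Int.alternating_sum_range_choose (n := m)
  rw [Finset.sum_range_succ, if_neg (by omega)] at h
  obtain ⟨j, hj⟩ : ∃ j, m = j + 1 := ⟨m-1, by omega⟩
  have h2 : (-1:ℤ)^m = -(-1:ℤ)^(m-1) := by subst hj; simp [pow_succ]
  simp only [Nat.choose_self] at h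
  push_cast at h ⊢
  linarith [h, h2]

theorem stmt_16 (m k : ℕ) (hm : 1 ≤ m) (hk : 1 ≤ k) (h r s : ℝ)
    (hh : 0 < h) (hr : 0 < r) (hs : s = 1 ∨ s = -1)
    (a b : ℕ → ℝ)
    (ha : ∀ i : ℕ, 1 ≤ i → i ≤ m →
      a i = (-1 : ℝ) ^ (i - 1) * ((m + k - i).choose (m - i + 1) : ℝ) *
        h ^ (m - i + 1) * r * s)
    (hb : ∀ i : ℕ, 1 ≤ i → i ≤ m →
      b i = (-1 : ℝ) ^ (i - 1) * (((m + k - i).choose (m - i + 1) : ℝ) - 2) *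
        h ^ (m - i + 1) * r * s) :
    ∑ i ∈ Finset.range m, (m.choose i : ℝ) * h ^ i * a (i + 1) =
        (((k - 1).choose m : ℝ) + (-1 : ℝ) ^ (m - 1)) * h ^ m * r * s ∧
    (2 ≤ k →
      ∑ i ∈ Finset.range m, (m.choose i : ℝ) * h ^ i * b (i + 1) =
        (((k - 1).choose m : ℝ) + (-1 : ℝ) ^ m) * h ^ m * r * s) ∧
    (2 ≤ k →
      ∑ i ∈ Finset.range m, (m.choose i : ℝ) * h ^ i * b (i + 1) ≠
        (((k - 1).choose m : ℝ) + (-1 : ℝ) ^ (m - 1)) * h ^ m * r * s) := by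
  have hs0 : s ≠ 0 := by rcases hs with h1 | h1 <;> rw [h1] <;> norm_num
  have hprod : h ^ m * r * s ≠ 0 := by positivity
  -- per-term simplifications
  have hterm : ∀ i ∈ Finset.range m,
      (m.choose i : ℝ) * h ^ i * a (i + 1) =
      ((-1:ℝ)^i * m.choose i * ((m+k-1-i).choose (m-i))) * (h ^ m * r * s) := by
    intro i hi
    simp only [Finset.mem_range] at hi
    rw [ha (i+1) (by omega) (by omega)]
    have e1 : i + 1 - 1 = i := by omega
    have e2 : m - (i+1) + 1 = m - i := by omega
    have e3 : m + k - (i+1) = m + k - 1 - i := by omega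
    rw [e1, e2, e3]
    have e4 : h ^ i * h ^ (m - i) = h ^ m := by
      rw [← pow_add]; congr 1; omega
    calc (m.choose i : ℝ) * h ^ i * ((-1:ℝ)^i * ((m+k-1-i).choose (m-i) : ℝ) * h^(m-i) * r * s)
        = ((-1:ℝ)^i * m.choose i * ((m+k-1-i).choose (m-i))) * ((h^i * h^(m-i)) * r * s) := by ring
      _ = _ := by rw [e4]
  have htermb : ∀ i ∈ Finset.range m,
      (m.choose i : ℝ) * h ^ i * b (i + 1) =
      ((-1:ℝ)^i * m.choose i * (((m+k-1-i).choose (m-i) : ℝ) - 2)) * (h ^ m * r * s) := by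
    intro i hi
    simp only [Finset.mem_range] at hi
    rw [hb (i+1) (by omega) (by omega)]
    have e1 : i + 1 - 1 = i := by omega
    have e2 : m - (i+1) + 1 = m - i := by omega
    have e3 : m + k - (i+1) = m + k - 1 - i := by omega
    rw [e1, e2, e3]
    have e4 : h ^ i * h ^ (m - i) = h ^ m := by
      rw [← pow_add]; congr 1; omega
    calc (m.choose i : ℝ) * h ^ i * ((-1:ℝ)^i * (((m+k-1-i).choose (m-i):ℝ) - 2) * h^(m-i) * r * s)
        = ((-1:ℝ)^i * m.choose i * (((m+k-1-i).choose (m-i):ℝ) - 2)) * ((h^i * h^(m-i)) * r * s) := by ring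
      _ = _ := by rw [e4]
  have hS : (∑ i ∈ Finset.range m, (-1:ℝ)^i * m.choose i * ((m+k-1-i).choose (m-i))) =
      ((k-1).choose m : ℝ) + (-1:ℝ)^(m-1) := by
    have := key_sum m k hm hk
    have := congrArg (fun z : ℤ => (z : ℝ)) this
    push_cast at this
    exact this
  have hT : (∑ i ∈ Finset.range m, (-1:ℝ)^i * m.choose i) = (-1:ℝ)^(m-1) := by
    have := key_alt m hm
    have := congrArg (fun z : ℤ => (z : ℝ)) this
    push_cast at this
    exact this
  have hsa : ∑ i ∈ Finset.range m, (m.choose i : ℝ) * h ^ i * a (i + 1) =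
      (((k - 1).choose m : ℝ) + (-1 : ℝ) ^ (m - 1)) * h ^ m * r * s := by
    rw [Finset.sum_congr rfl hterm, ← Finset.sum_mul, hS]; ring
  have hsb : ∑ i ∈ Finset.range m, (m.choose i : ℝ) * h ^ i * b (i + 1) =
      (((k - 1).choose m : ℝ) + (-1 : ℝ) ^ m) * h ^ m * r * s := by
    rw [Finset.sum_congr rfl htermb, ← Finset.sum_mul]
    have hsplit : (∑ i ∈ Finset.range m,
        (-1:ℝ)^i * m.choose i * (((m+k-1-i).choose (m-i) : ℝ) - 2)) =
        (∑ i ∈ Finset.range m, (-1:ℝ)^i * m.choose i * ((m+k-1-i).choose (m-i)))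
        - 2 * (∑ i ∈ Finset.range m, (-1:ℝ)^i * m.choose i) := by
      rw [Finset.mul_sum, ← Finset.sum_sub_distrib]
      exact Finset.sum_congr rfl fun i _ => by ring
    rw [hsplit, hS, hT]
    have h2 : (-1:ℝ)^m = -(-1:ℝ)^(m-1) := by
      obtain ⟨j, hj⟩ : ∃ j, m = j + 1 := ⟨m-1, by omega⟩
      subst hj; simp [pow_succ]
    rw [h2]; ring
  refine ⟨hsa, fun _ => hsb, fun _ hc => ?_⟩
  rw [hsb] at hc
  have h2 : (-1:ℝ)^m = -(-1:ℝ)^(m-1) := by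
    obtain ⟨j, hj⟩ : ∃ j, m = j + 1 := ⟨m-1, by omega⟩
    subst hj; simp [pow_succ]
  have hne : ((-1:ℝ)^m : ℝ) ≠ (-1:ℝ)^(m-1) := by
    rw [h2]
    intro he
    have : (-1:ℝ)^(m-1) = 0 := by linarith
    exact (pow_ne_zero _ (by norm_num)) this
  have hc1 := mul_right_cancel₀ hs0 hc
  have hc2 := mul_right_cancel₀ (ne_of_gt hr) hc1
  have hc3 := mul_right_cancel₀ (pow_ne_zero m (ne_of_gt hh)) hc2
  exact hne (add_left_cancel hc3)
end

section
/- Let m ≥ 2, 0 ≤ ν ≤ m-1, 1 ≤ k ≤ m-1-ν, h > 0, r > 0, s = ±1, and define a_k ∈ ℝ^m by x_i = (-1)^(i-1) · C(m+k-i, m-i+1) · h^(m-i+1) · r · s. Then for every μ with 0 ≤ μ ≤ ν, we have Σ_{i=0}^{m-(μ+1)} C(m-(μ+1), i) · h^i · x_{i+(μ+1)} = 0. -/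
open Finset fwdDiff

private lemma fwdDiff_iter_zero_fun (n : ℕ) :
    (fwdDiff 1)^[n] (fun _ : ℕ ↦ (0 : ℤ)) = fun _ ↦ 0 := by
  induction n with
  | zero => rfl
  | succ n ih => rw [Function.iterate_succ_apply, show fwdDiff 1 (fun _ : ℕ ↦ (0:ℤ)) = fun _ ↦ 0 from
      funext fun _ ↦ sub_self 0, ih]

private lemma fwdDiff_iter_shift (p : ℕ → ℤ) (c : ℕ) (n : ℕ) :
    (fwdDiff 1)^[n] (fun x ↦ p (x + c)) = fun x ↦ (fwdDiff 1)^[n] p (x + c) := by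
  induction n generalizing p with
  | zero => rfl
  | succ n ih =>
    rw [Function.iterate_succ_apply, show fwdDiff 1 (fun x ↦ p (x + c)) =
      fun x ↦ (fwdDiff 1 p) (x + c) from funext fun x ↦ by
        simp only [fwdDiff]; rw [add_right_comm], ih (fwdDiff 1 p), Function.iterate_succ_apply]
  
private lemma key (n k : ℕ) (hk1 : 1 ≤ k) (hkn : k ≤ n) :
    ∑ i ∈ Finset.range (n + 1),
      (-1 : ℤ) ^ i * (n.choose i : ℤ) * (((n + k - i).choose (k - 1) : ℕ) : ℤ) = 0 := by
  have H := fwdDiff_iter_eq_sum_shift (1 : ℕ) (fun x ↦ (((x + k).choose (k - 1) : ℕ) : ℤ)) n 0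
  have hzero : (fwdDiff 1)^[n] (fun x : ℕ ↦ (((x + k).choose (k - 1) : ℕ) : ℤ)) 0 = 0 := by
    have h1 : (fun x : ℕ ↦ (((x + k).choose (k - 1) : ℕ) : ℤ))
        = fun x ↦ (fun y : ℕ ↦ ((y.choose (k - 1) : ℕ) : ℤ)) (x + k) := rfl
    rw [h1, fwdDiff_iter_shift (fun y : ℕ ↦ ((y.choose (k - 1) : ℕ) : ℤ)) k n]
    have h2 : (fwdDiff 1)^[n] (fun y : ℕ ↦ ((y.choose (k - 1) : ℕ) : ℤ)) = fun _ ↦ 0 := by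
      have hn : n = (n - k) + 1 + (k - 1) := by omega
      rw [hn, Function.iterate_add_apply]
      have h3 := fwdDiff_iter_choose 0 (k - 1)
      simp only [add_zero] at h3
      rw [h3]
      simp only [Nat.choose_zero_right, Nat.cast_one]
      rw [Function.iterate_succ_apply, fwdDiff_const, fwdDiff_iter_zero_fun]
    rw [h2]
  rw [hzero] at H
  rw [← Finset.sum_range_reflect, H]
  refine Finset.sum_congr rfl fun j hj => ?_
  rw [Finset.mem_range] at hj
  have hjn : j ≤ n := by omega
  rw [show n + 1 - 1 - j = n - j from by omega, Nat.choose_symm hjn,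
    show n + k - (n - j) = 0 + j • 1 + k from by simp only [smul_eq_mul, mul_one]; omega,
    smul_eq_mul, mul_assoc]
  simp only [smul_eq_mul]
  ring


theorem stmt_17 (m ν k : ℕ) (hm : 2 ≤ m) (hν : ν ≤ m - 1) (hk1 : 1 ≤ k)
    (hk : k ≤ m - 1 - ν) (h r s : ℝ)
    (hh : 0 < h) (hr : 0 < r) (hs : s = 1 ∨ s = -1)
    (a : ℕ → ℝ)
    (ha : ∀ i : ℕ, 1 ≤ i → i ≤ m →
      a i = (-1 : ℝ) ^ (i - 1) * ((m + k - i).choose (m - i + 1) : ℝ) *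
        h ^ (m - i + 1) * r * s) :
    ∀ μ : ℕ, μ ≤ ν →
      ∑ i ∈ Finset.range (m - μ),
        ((m - (μ + 1)).choose i : ℝ) * h ^ i * a (i + (μ + 1)) = 0 := by
  intro μ hμ
  set n := m - 1 - μ with hn
  have hkn : k ≤ n := by omega
  have hrange : m - μ = n + 1 := by omega
  have hchoose : m - (μ + 1) = n := by omega
  rw [hrange, hchoose]
  have hterm : ∀ i ∈ Finset.range (n + 1), (n.choose i : ℝ) * h ^ i * a (i + (μ + 1)) =
      ((-1 : ℝ) ^ μ * h ^ (n + 1) * r * s) *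
        ((((-1 : ℤ) ^ i * (n.choose i : ℤ) * (((n + k - i).choose (k - 1) : ℕ) : ℤ)) : ℤ) : ℝ) := by
    intro i hi
    rw [Finset.mem_range] at hi
    have hi' : i ≤ n := by omega
    rw [ha (i + (μ + 1)) (by omega) (by omega),
        show i + (μ + 1) - 1 = i + μ from by omega,
        show m + k - (i + (μ + 1)) = n + k - i from by omega,
        show m - (i + (μ + 1)) + 1 = n + 1 - i from by omega,
        show (n + k - i).choose (n + 1 - i) = (n + k - i).choose (k - 1) from by
          rw [← Nat.choose_symm (show k - 1 ≤ n + k - i from by omega)]; congr 1; omega]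
    push_cast
    rw [show h ^ (n + 1 - i) = h ^ (n + 1) / h ^ i from by
      rw [eq_div_iff (by positivity), ← pow_add]; congr 1; omega,
      pow_add (-1 : ℝ) i μ]
    field_simp
  rw [Finset.sum_congr rfl hterm, ← Finset.mul_sum]
  have hsum : ∑ i ∈ Finset.range (n + 1),
      ((((-1 : ℤ) ^ i * (n.choose i : ℤ) * (((n + k - i).choose (k - 1) : ℕ) : ℤ)) : ℤ) : ℝ) = 0 := by
    rw [← Int.cast_sum, key n k hk1 hkn, Int.cast_zero]
  rw [hsum, mul_zero]
end

section
/- Let m ≥ 2, 0 ≤ ν ≤ m-1, 2 ≤ k ≤ m-1-ν, h > 0, r > 0, s = ±1, and define b_k ∈ ℝ^m by x_i = (-1)^(i-1) · (C(m+k-i, m-i+1) - 2) · h^(m-i+1) · r · s. Then for every μ with 0 ≤ μ ≤ ν, we have Σ_{i=0}^{m-(μ+1)} C(m-(μ+1), i) · h^i · x_{i+(μ+1)} = 0. -/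
open Finset

private lemma aux_diff (n : ℕ) : ∀ j M : ℕ, j < n → n ≤ M →
    ∑ i ∈ range (n+1), (-1:ℝ)^i * (n.choose i) * ((M-i).choose j) = 0 := by
  induction n with
  | zero => intro j M hj _; omega
  | succ n ih =>
    intro j M hj hM
    set g : ℕ → ℝ := fun i => (-1:ℝ)^i * (n.choose i) * ((M-i).choose j) with hg
    have key : ∑ i ∈ range (n+2), (-1:ℝ)^i * ((n+1).choose i) * ((M-i).choose j)
        = ∑ i ∈ range (n+1), (-1:ℝ)^i * (n.choose i) *
            (((M-i).choose j : ℝ) - ((M-(i+1)).choose j : ℝ)) := by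
      have hsucc : ∑ i ∈ range (n+1), g (i+1) = (∑ i ∈ range (n+1), g i) - g 0 := by
        have h1 := Finset.sum_range_succ' g (n+1)
        have h2 := Finset.sum_range_succ g (n+1)
        have hgz : g (n+1) = 0 := by simp [hg, Nat.choose_succ_self]
        rw [h2, hgz] at h1
        linarith [h1]
      have e1 : ∑ i ∈ range (n+2), (-1:ℝ)^i * ((n+1).choose i) * ((M-i).choose j)
          = (∑ i ∈ range (n+1),
              (-1:ℝ)^(i+1) * ((n+1).choose (i+1)) * ((M-(i+1)).choose j))
            + (-1:ℝ)^0 * ((n+1).choose 0) * ((M-0).choose j) :=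
        Finset.sum_range_succ' _ (n+1)
      have e2 : ∀ i : ℕ,
          (-1:ℝ)^(i+1) * ((n+1).choose (i+1)) * ((M-(i+1)).choose j)
          = -((-1:ℝ)^i * (n.choose i) * ((M-(i+1)).choose j)) + g (i+1) := by
        intro i
        rw [Nat.choose_succ_succ]
        simp only [hg]
        push_cast
        ring
      rw [e1, Finset.sum_congr rfl (fun i _ => e2 i), Finset.sum_add_distrib,
        hsucc]
      simp only [hg, mul_sub, Finset.sum_sub_distrib, Finset.sum_neg_distrib]
      simp
      ring
    rw [key]
    cases j with
    | zero =>
      apply Finset.sum_eq_zero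
      intro i _
      simp
    | succ j' =>
      have hc : ∀ i ∈ range (n+1),
          (-1:ℝ)^i * (n.choose i) *
            (((M-i).choose (j'+1) : ℝ) - ((M-(i+1)).choose (j'+1) : ℝ))
          = (-1:ℝ)^i * (n.choose i) * (((M-1-i).choose j' : ℝ)) := by
        intro i hi
        simp only [mem_range] at hi
        have h1 : M - i = (M - 1 - i) + 1 := by omega
        have h2 : M - (i+1) = M - 1 - i := by omega
        rw [h1, h2, Nat.choose_succ_succ]
        push_cast
        ring
      rw [Finset.sum_congr rfl hc]
      exact ih j' (M-1) (by omega) (by omega)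

private lemma aux_alt (n : ℕ) (hn : 1 ≤ n) :
    ∑ i ∈ range (n+1), (-1:ℝ)^i * (n.choose i) = 0 := by
  have := Int.alternating_sum_range_choose (n := n)
  rw [if_neg (by omega)] at this
  have : ((∑ i ∈ range (n+1), (-1:ℤ)^i * (n.choose i) : ℤ) : ℝ) = 0 := by
    rw [this]; norm_num
  push_cast at this
  convert this using 2

theorem stmt_18 (m ν k : ℕ) (hm : 2 ≤ m) (hν : ν ≤ m - 1) (hk1 : 2 ≤ k)
    (hk : k ≤ m - 1 - ν) (h r s : ℝ)
    (hh : 0 < h) (hr : 0 < r) (hs : s = 1 ∨ s = -1)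
    (b : ℕ → ℝ)
    (hb : ∀ i : ℕ, 1 ≤ i → i ≤ m →
      b i = (-1 : ℝ) ^ (i - 1) * (((m + k - i).choose (m - i + 1) : ℝ) - 2) *
        h ^ (m - i + 1) * r * s) :
    ∀ μ : ℕ, μ ≤ ν →
      ∑ i ∈ Finset.range (m - μ),
        ((m - (μ + 1)).choose i : ℝ) * h ^ i * b (i + (μ + 1)) = 0 := by
  intro μ hμ
  have hνk : ν + k ≤ m - 1 := by omega
  set n := m - (μ + 1) with hn
  have hkn : k ≤ n := by omega
  have hrange : m - μ = n + 1 := by omega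
  rw [hrange]
  have step : ∀ i ∈ range (n+1),
      ((m - (μ + 1)).choose i : ℝ) * h ^ i * b (i + (μ + 1))
      = ((-1:ℝ)^μ * r * s * h^(n+1)) *
          ((-1:ℝ)^i * (n.choose i) * (((n+k-i).choose (k-1) : ℝ) - 2)) := by
    intro i hi
    simp only [mem_range] at hi
    rw [hb (i + (μ + 1)) (by omega) (by omega)]
    have e2 : i + (μ+1) - 1 = i + μ := by omega
    have e3 : m - (i + (μ+1)) + 1 = n + 1 - i := by omega
    have e4 : m + k - (i + (μ+1)) = n + k - i := by omega
    have e5 : (n+k-i).choose (n+1-i) = (n+k-i).choose (k-1) := by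
      rw [show n+1-i = (n+k-i)-(k-1) from by omega, Nat.choose_symm (by omega)]
    rw [e2, e3, e4, e5]
    have hpow : h ^ i * h ^ (n+1-i) = h ^ (n+1) := by
      rw [← pow_add]; congr 1; omega
    have hsgn : (-1:ℝ)^(i+μ) = (-1:ℝ)^i * (-1:ℝ)^μ := pow_add _ _ _
    rw [hsgn, ← hpow]
    ring
  rw [Finset.sum_congr rfl step, ← Finset.mul_sum]
  have hsum : ∑ i ∈ range (n+1),
      (-1:ℝ)^i * (n.choose i) * (((n+k-i).choose (k-1) : ℝ) - 2) = 0 := by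
    have hsplit : ∀ i ∈ range (n+1),
        (-1:ℝ)^i * (n.choose i) * (((n+k-i).choose (k-1) : ℝ) - 2)
        = (-1:ℝ)^i * (n.choose i) * ((n+k-i).choose (k-1) : ℝ)
          - 2 * ((-1:ℝ)^i * (n.choose i)) := by
      intro i _; ring
    rw [Finset.sum_congr rfl hsplit, Finset.sum_sub_distrib,
      aux_diff n (k-1) (n+k) (by omega) (by omega), ← Finset.mul_sum,
      aux_alt n (by omega)]
    ring
  rw [hsum, mul_zero]
end
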